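/- In a CD neighborhood graph with degout(v) ≥ 1, degin(v) + n_K ≥ 1 and n_I + n_J + n_K ≥ 1, the difference between the normalized betweenness and the CD Index equals the explicit shift constant: B(v)/(degout(v)·(degin(v) + n_K)) − (n_I − n_J)/(n_I + n_J + n_K) = 2·n_J/(degin(v) + n_K) − (Σ_{j ∈ J} (degout(j) − 1)) / (degout(v)·(degin(v) + n_K)). -/

import Mathlib

open Finset

variable {V : Type*}

/-- `l` is a directed path from `s` to `t` in the directed graph with adjacency
relation `adj`: consecutive vertices are joined by edges, it starts at `s`,
ends at `t`, and has no repeated vertices. -/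
def IsDirPath (adj : V → V → Prop) (s t : V) (l : List V) : Prop :=
  l.Chain' adj ∧ l.head? = some s ∧ l.getLast? = some t ∧ l.Nodup

/-- `l` is a shortest directed path from `s` to `t`. -/
def IsShortestDirPath (adj : V → V → Prop) (s t : V) (l : List V) : Prop :=
  IsDirPath adj s t l ∧ ∀ l', IsDirPath adj s t l' → l.length ≤ l'.length

/-- `x` occurs as an interior vertex of the list `l` (i.e. `x` is a member of `l`
which is neither the first nor the last entry). -/
def ListInterior (l : List V) (x : V) : Prop := x ∈ l.tail.dropLast

/-- `σ(s,t)`: the number of shortest directed paths from `s` to `t`. -/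
noncomputable def numShortest (adj : V → V → Prop) (s t : V) : ℕ :=
  {l : List V | IsShortestDirPath adj s t l}.ncard

/-- `σ(s,t∣x)`: the number of shortest directed paths from `s` to `t` that pass
through `x` as an interior vertex. -/
noncomputable def numShortestThrough (adj : V → V → Prop) (s t x : V) : ℕ :=
  {l : List V | IsShortestDirPath adj s t l ∧ ListInterior l x}.ncard

/-- A CD Index neighborhood graph: a directed graph whose vertex set is the
disjoint union `{v} ∪ I ∪ J ∪ K ∪ T` of the focal vertex `v` and four pairwise
disjoint finite sets, with the edge structure of the CD Index neighborhood. -/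
structure CDGraph (V : Type*) where
  /-- the adjacency relation: `adj u w` means there is a directed edge `u → w` -/
  adj : V → V → Prop
  /-- the focal vertex -/
  v : V
  /-- the set of `I`-type vertices -/
  I : Finset V
  /-- the set of `J`-type vertices -/
  J : Finset V
  /-- the set of `K`-type vertices -/
  K : Finset V
  /-- the set of vertices cited by `v` -/
  T : Finset V
  v_not_I : v ∉ I
  v_not_J : v ∉ J
  v_not_K : v ∉ K
  v_not_T : v ∉ T
  disj_IJ : Disjoint I J
  disj_IK : Disjoint I K
  disj_IT : Disjoint I T
  disj_JK : Disjoint J K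
  disj_JT : Disjoint J T
  disj_KT : Disjoint K T
  /-- every vertex is `v` or belongs to one of `I`, `J`, `K`, `T` -/
  cover : ∀ x : V, x = v ∨ x ∈ I ∨ x ∈ J ∨ x ∈ K ∨ x ∈ T
  /-- `v` has an out-edge to each element of `T` and no other out-edges -/
  v_out : ∀ w, adj v w ↔ w ∈ T
  /-- each `i ∈ I` has exactly one out-edge, namely to `v` -/
  I_out : ∀ i ∈ I, ∀ w, adj i w ↔ w = v
  /-- each `j ∈ J` has an out-edge to `v` -/
  J_cites_v : ∀ j ∈ J, adj j v
  /-- each `j ∈ J` has at least one out-edge into `T` -/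
  J_cites_T : ∀ j ∈ J, ∃ t ∈ T, adj j t
  /-- every out-edge of `j ∈ J` goes to `{v} ∪ T` -/
  J_out : ∀ j ∈ J, ∀ w, adj j w → w = v ∨ w ∈ T
  /-- each `k ∈ K` has at least one out-edge -/
  K_cites : ∀ k ∈ K, ∃ w, adj k w
  /-- every out-edge of `k ∈ K` goes into `T` -/
  K_out : ∀ k ∈ K, ∀ w, adj k w → w ∈ T
  /-- vertices in `T` have no out-edges -/
  T_out : ∀ t ∈ T, ∀ w, ¬ adj t w

/-- The out-degree of a vertex `u`: the number of out-neighbors of `u`. -/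
noncomputable def CDGraph.degout (G : CDGraph V) (u : V) : ℕ :=
  {w | G.adj u w}.ncard

/-- The in-degree of the focal vertex `v`, namely `n_I + n_J`. -/
def CDGraph.degin (G : CDGraph V) : ℕ := G.I.card + G.J.card

/-- The raw betweenness of the focal vertex `v`:
`B(v) = Σ_{s ≠ v} Σ_{t ≠ v} σ(s,t∣v)/σ(s,t)`, where terms with `σ(s,t) = 0`
count as `0` (division by zero in `ℝ` yields `0`). -/
noncomputable def CDGraph.B [Fintype V] [DecidableEq V] (G : CDGraph V) : ℝ :=
  ∑ s ∈ univ.erase G.v, ∑ t ∈ univ.erase G.v,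
    (numShortestThrough G.adj s t G.v : ℝ) / (numShortest G.adj s t : ℝ)

/-!
Every out-neighbour of a vertex lies in `{v} ∪ T` and `T` is a sink, so a directed path has at
most two edges, and one with two edges is `s → v → t` with `t ∈ T`. Hence `v` is interior to a
shortest `s`–`t` path exactly when `s → v`, `t ∈ T` and `s ↛ t`, and that path is then the only
shortest one. So `B(v)` counts the pairs `(s, t) ∈ (I ∪ J) × T` with `s ↛ t`: each `i ∈ I`
contributes `|T|`, each `j ∈ J` contributes `|T| - (degout(j) - 1)`, and the identity is algebra
over the common denominator `degin(v) + n_K = n_I + n_J + n_K`.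
-/

namespace IsDirPath

variable {adj : V → V → Prop} {s x t : V}

theorem pair (h : adj s t) (hst : s ≠ t) : IsDirPath adj s t [s, t] := by
  refine ⟨List.isChain_pair.2 h, rfl, rfl, ?_⟩
  simpa using hst

theorem triple (hsx : adj s x) (hxt : adj x t) (hs : s ≠ x) (hst : s ≠ t) (hx : x ≠ t) :
    IsDirPath adj s t [s, x, t] := by
  refine ⟨List.isChain_cons_cons.2 ⟨hsx, List.isChain_pair.2 hxt⟩, rfl, rfl, ?_⟩
  simp [hs, hst, hx]

end IsDirPath

section ShortestPaths

variable {adj : V → V → Prop} {s t x : V} {l₀ : List V}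

theorem isShortestDirPath_iff_of_isDirPath_iff (h : ∀ l, IsDirPath adj s t l ↔ l = l₀)
    (l : List V) : IsShortestDirPath adj s t l ↔ l = l₀ := by
  refine ⟨fun hl => (h l).1 hl.1, ?_⟩
  rintro rfl
  exact ⟨(h _).2 rfl, fun l' hl' => (congrArg List.length ((h l').1 hl')).ge⟩

theorem numShortestThrough_div_numShortest_of_unique (h : ∀ l, IsDirPath adj s t l ↔ l = l₀)
    (hx : ListInterior l₀ x) :
    (numShortestThrough adj s t x : ℝ) / numShortest adj s t = 1 := by
  have hthrough : {l | l = l₀ ∧ ListInterior l x} = {l₀} := by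
    ext l
    exact ⟨And.left, fun hl => ⟨hl, hl ▸ hx⟩⟩
  simp [numShortestThrough, numShortest, isShortestDirPath_iff_of_isDirPath_iff h, hthrough]

end ShortestPaths

namespace CDGraph

variable (G : CDGraph V) {s t u w x : V}

theorem eq_v_or_mem_T_of_adj (h : G.adj u w) : w = G.v ∨ w ∈ G.T := by
  rcases G.cover u with rfl | hu | hu | hu | hu
  · exact .inr ((G.v_out w).1 h)
  · exact .inl ((G.I_out u hu w).1 h)
  · exact G.J_out u hu w h
  · exact .inr (G.K_out u hu w h)
  · exact absurd h (G.T_out u hu w)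

theorem eq_v_and_mem_T_of_adj_of_adj (h₁ : G.adj u w) (h₂ : G.adj w x) : w = G.v ∧ x ∈ G.T := by
  rcases G.eq_v_or_mem_T_of_adj h₁ with rfl | hw
  · exact ⟨rfl, (G.v_out x).1 h₂⟩
  · exact absurd h₂ (G.T_out w hw x)

theorem ne_of_adj (h : G.adj u w) : u ≠ w := by
  rintro rfl
  obtain ⟨rfl, hv⟩ := G.eq_v_and_mem_T_of_adj_of_adj h h
  exact G.v_not_T hv

theorem mem_I_or_mem_J_of_adj_v (h : G.adj s G.v) : s ∈ G.I ∨ s ∈ G.J := by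
  rcases G.cover s with rfl | hs | hs | hs | hs
  · exact absurd rfl (G.ne_of_adj h)
  · exact .inl hs
  · exact .inr hs
  · exact absurd (G.K_out s hs _ h) G.v_not_T
  · exact absurd h (G.T_out s hs _)

theorem isDirPath_cases {l : List V} (h : IsDirPath G.adj s t l) :
    (l = [s] ∧ s = t) ∨ (l = [s, t] ∧ G.adj s t) ∨
      (l = [s, G.v, t] ∧ G.adj s G.v ∧ t ∈ G.T) := by
  obtain ⟨hc, hs, ht, -⟩ := h
  rcases l with _ | ⟨a, _ | ⟨b, _ | ⟨c, _ | ⟨d, l⟩⟩⟩⟩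
  · cases hs
  · simp only [List.head?_cons, List.getLast?_singleton, Option.some.injEq] at hs ht
    subst hs ht
    exact .inl ⟨rfl, rfl⟩
  · simp only [List.head?_cons, List.getLast?_cons_cons, List.getLast?_singleton,
      Option.some.injEq] at hs ht
    subst hs ht
    exact .inr (.inl ⟨rfl, List.isChain_pair.1 hc⟩)
  · simp only [List.head?_cons, List.getLast?_cons_cons, List.getLast?_singleton,
      Option.some.injEq] at hs ht
    subst hs ht
    obtain ⟨hab, hbc⟩ := List.isChain_cons_cons.1 hc
    obtain ⟨rfl, hcT⟩ := G.eq_v_and_mem_T_of_adj_of_adj hab (List.isChain_pair.1 hbc)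
    exact .inr (.inr ⟨rfl, hab, hcT⟩)
  · obtain ⟨hab, hc⟩ := List.isChain_cons_cons.1 hc
    obtain ⟨hbc, hc⟩ := List.isChain_cons_cons.1 hc
    obtain ⟨hcd, -⟩ := List.isChain_cons_cons.1 hc
    exact absurd hcd (G.T_out c (G.eq_v_and_mem_T_of_adj_of_adj hab hbc).2 d)

theorem adj_v_of_isShortestDirPath_of_listInterior {l : List V}
    (h : IsShortestDirPath G.adj s t l) (hv : ListInterior l G.v) :
    G.adj s G.v ∧ t ∈ G.T ∧ ¬ G.adj s t := by
  rcases G.isDirPath_cases h.1 with ⟨rfl, -⟩ | ⟨rfl, -⟩ | ⟨rfl, hsv, ht⟩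
  · simp [ListInterior] at hv
  · simp [ListInterior] at hv
  · refine ⟨hsv, ht, fun hst => ?_⟩
    have := h.2 _ (IsDirPath.pair hst (G.ne_of_adj hst))
    simp at this

theorem numShortestThrough_v_eq_zero (h : ¬ (G.adj s G.v ∧ t ∈ G.T ∧ ¬ G.adj s t)) :
    numShortestThrough G.adj s t G.v = 0 := by
  suffices {l | IsShortestDirPath G.adj s t l ∧ ListInterior l G.v} = ∅ by
    rw [numShortestThrough, this, Set.ncard_empty]
  exact Set.eq_empty_of_forall_notMem fun l hl =>
    h (G.adj_v_of_isShortestDirPath_of_listInterior hl.1 hl.2)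

theorem isDirPath_iff_eq_of_not_adj (hsv : G.adj s G.v) (ht : t ∈ G.T) (hst : ¬ G.adj s t)
    (l : List V) : IsDirPath G.adj s t l ↔ l = [s, G.v, t] := by
  refine ⟨fun hl => ?_, ?_⟩
  · rcases G.isDirPath_cases hl with ⟨-, rfl⟩ | ⟨-, h⟩ | ⟨rfl, -⟩
    · exact absurd hsv (G.T_out s ht _)
    · exact absurd h hst
    · rfl
  · rintro rfl
    exact .triple hsv ((G.v_out t).2 ht) (G.ne_of_adj hsv)
      (fun h => G.T_out s (h ▸ ht) _ hsv) (fun h => G.v_not_T (h ▸ ht))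

theorem numShortestThrough_v_div_numShortest [DecidableEq V] [DecidableRel G.adj] (s t : V) :
    (numShortestThrough G.adj s t G.v : ℝ) / numShortest G.adj s t =
      if G.adj s G.v ∧ t ∈ G.T ∧ ¬ G.adj s t then 1 else 0 := by
  split_ifs with h
  · exact numShortestThrough_div_numShortest_of_unique
      (G.isDirPath_iff_eq_of_not_adj h.1 h.2.1 h.2.2) (by simp [ListInterior])
  · rw [G.numShortestThrough_v_eq_zero h, Nat.cast_zero, zero_div]

theorem B_eq_sum_card_filter_not_adj [Fintype V] [DecidableEq V] [DecidableRel G.adj] :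
    G.B = ∑ s ∈ G.I ∪ G.J, ((G.T.filter (¬ G.adj s ·)).card : ℝ) := by
  have hT : G.T ⊆ univ.erase G.v := fun t ht =>
    mem_erase.2 ⟨fun h => G.v_not_T (h ▸ ht), mem_univ t⟩
  have hIJ : G.I ∪ G.J ⊆ univ.erase G.v := fun s hs =>
    mem_erase.2 ⟨fun h => (mem_union.1 hs).elim (G.v_not_I <| h ▸ ·) (G.v_not_J <| h ▸ ·),
      mem_univ s⟩
  have hrow : ∀ s, ∑ t ∈ univ.erase G.v,
      (numShortestThrough G.adj s t G.v : ℝ) / numShortest G.adj s t =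
        if G.adj s G.v then ((G.T.filter (¬ G.adj s ·)).card : ℝ) else 0 := by
    intro s
    simp_rw [G.numShortestThrough_v_div_numShortest s]
    split_ifs with hsv
    · have hmem (t : V) : t ∈ G.T ∧ ¬ G.adj s t ↔ t ∈ G.T.filter (¬ G.adj s ·) := by
        rw [mem_filter]
      simp_rw [hsv, true_and, hmem, sum_ite_mem,
        inter_eq_right.2 ((filter_subset _ _).trans hT)]
      rw [sum_const, nsmul_one]
    · simp only [hsv, false_and, if_false, sum_const_zero]
  rw [CDGraph.B, sum_congr rfl fun s _ => hrow s, ← sum_subset hIJ]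
  · exact sum_congr rfl fun s hs =>
      if_pos ((mem_union.1 hs).elim (G.I_out s · G.v |>.2 rfl) (G.J_cites_v s))
  · intro s _ hs
    rw [if_neg fun hsv => hs (mem_union.2 (G.mem_I_or_mem_J_of_adj_v hsv))]

theorem degout_v : G.degout G.v = G.T.card := by
  rw [degout, show {w | G.adj G.v w} = G.T by ext w; exact G.v_out w, Set.ncard_coe_finset]

theorem degout_of_mem_J {j : V} [DecidableEq V] [DecidablePred (G.adj j)] (hj : j ∈ G.J) :
    G.degout j = (G.T.filter (G.adj j)).card + 1 := by
  have hout : {w | G.adj j w} = ↑(insert G.v (G.T.filter (G.adj j))) := by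
    ext w
    simp only [Set.mem_ofPred_eq, coe_insert, Set.mem_insert_iff, mem_coe, mem_filter]
    refine ⟨fun h => (G.J_out j hj w h).imp id (⟨·, h⟩), ?_⟩
    rintro (rfl | ⟨-, h⟩)
    exacts [G.J_cites_v j hj, h]
  rw [degout, hout, Set.ncard_coe_finset, card_insert_of_notMem (by simp [G.v_not_T])]

theorem card_filter_not_adj_of_mem_I {i : V} [DecidablePred (G.adj i)] (hi : i ∈ G.I) :
    (G.T.filter (¬ G.adj i ·)).card = G.T.card := by
  rw [filter_true_of_mem]
  exact fun t ht h => G.v_not_T ((G.I_out i hi t).1 h ▸ ht)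

theorem card_filter_not_adj_of_mem_J {j : V} [DecidableEq V] [DecidablePred (G.adj j)]
    (hj : j ∈ G.J) :
    ((G.T.filter (¬ G.adj j ·)).card : ℝ) = G.T.card - (G.degout j - 1) := by
  have hsplit := card_filter_add_card_filter_not (s := G.T) (G.adj j)
  rw [G.degout_of_mem_J hj, ← hsplit]
  push_cast
  ring

theorem B_eq [Fintype V] [DecidableEq V] :
    G.B = G.I.card * G.T.card + ∑ j ∈ G.J, (G.T.card - ((G.degout j : ℝ) - 1)) := by
  classical
  rw [B_eq_sum_card_filter_not_adj, sum_union G.disj_IJ,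
    sum_congr rfl fun i hi => congrArg Nat.cast (G.card_filter_not_adj_of_mem_I hi),
    sum_congr rfl fun j hj => G.card_filter_not_adj_of_mem_J hj, sum_const, nsmul_eq_mul]

end CDGraph

theorem cd_betweenness_cd_index_shift_general [Fintype V] [DecidableEq V] (G : CDGraph V)
    (h1 : 1 ≤ G.degout G.v) (h2 : 1 ≤ G.degin + G.K.card) :
    G.B / ((G.degout G.v : ℝ) * ((G.degin : ℝ) + (G.K.card : ℝ)))
      - ((G.I.card : ℝ) - (G.J.card : ℝ))
          / ((G.I.card : ℝ) + (G.J.card : ℝ) + (G.K.card : ℝ))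
    = 2 * (G.J.card : ℝ) / ((G.degin : ℝ) + (G.K.card : ℝ))
      - (∑ j ∈ G.J, ((G.degout j : ℝ) - 1))
          / ((G.degout G.v : ℝ) * ((G.degin : ℝ) + (G.K.card : ℝ))) := by
  rw [G.degout_v] at h1 ⊢
  rw [CDGraph.degin] at h2
  have hT : (G.T.card : ℝ) ≠ 0 := Nat.cast_ne_zero.2 (by omega)
  have hN : ((G.I.card + G.J.card + G.K.card : ℕ) : ℝ) ≠ 0 := Nat.cast_ne_zero.2 (by omega)
  push_cast at hN
  rw [G.B_eq, CDGraph.degin, Nat.cast_add, sum_sub_distrib, sum_const, nsmul_eq_mul]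
  field_simp
  ring

/-- In a CD neighborhood graph with `degout(v) ≥ 1`,
`degin(v) + n_K ≥ 1` and `n_I + n_J + n_K ≥ 1`, the difference between the
normalized betweenness and the CD Index equals the explicit shift constant:
`B(v)/(degout(v)·(degin(v) + n_K)) − (n_I − n_J)/(n_I + n_J + n_K)
  = 2·n_J/(degin(v) + n_K)
    − (Σ_{j ∈ J} (degout(j) − 1)) / (degout(v)·(degin(v) + n_K))`. -/
theorem cd_betweenness_cd_index_shift [Fintype V] [DecidableEq V] (G : CDGraph V)
    (h1 : 1 ≤ G.degout G.v) (h2 : 1 ≤ G.degin + G.K.card)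
    (h3 : 1 ≤ G.I.card + G.J.card + G.K.card) :
    G.B / ((G.degout G.v : ℝ) * ((G.degin : ℝ) + (G.K.card : ℝ)))
      - ((G.I.card : ℝ) - (G.J.card : ℝ))
          / ((G.I.card : ℝ) + (G.J.card : ℝ) + (G.K.card : ℝ))
    = 2 * (G.J.card : ℝ) / ((G.degin : ℝ) + (G.K.card : ℝ))
      - (∑ j ∈ G.J, ((G.degout j : ℝ) - 1))
          / ((G.degout G.v : ℝ) * ((G.degin : ℝ) + (G.K.card : ℝ))) :=
  cd_betweenness_cd_index_shift_general G h1 h2
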